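/- For ξ_m > 0 and μ ∈ (0, ξ_m), the function f(τ) = 2τ·log(cosh(ξ_m/(2τ))/cosh(μ/(2τ))) + μ·∫₀^μ tanh(ξ/(2τ))/ξ dξ is strictly decreasing in τ on (0, ∞), with f(τ) → ∞ as τ → 0⁺ and f(τ) → 0 as τ → ∞. -/

import Mathlib

/-!
Since `x ↦ c log cosh (x / c)` has derivative `tanh (x / c)`, the logarithmic term equals
`∫ x in μ..ξm, tanh (x / 2τ)`, and the substitution `u = ξ / 2τ` turns the second term into
`μ T(μ / 2τ)` with `T s = ∫ u in 0..s, tanh u / u`. Both pieces decrease in `τ`, the first strictly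
since `tanh` is strictly increasing. As `τ → 0⁺`, `T(μ / 2τ)` grows like `tanh 1 · log (μ / 2τ)`
while the first piece stays nonnegative. As `τ → ∞`, the first piece tends to `0` by dominated
convergence (`|tanh| ≤ 1`), and `T(μ / 2τ) → T 0 = 0` because `T` is continuous, the integrand
being bounded by `1`.
-/

open Filter Topology MeasureTheory intervalIntegral Set

namespace Real

theorem continuous_tanh : Continuous tanh := by
  rw [show tanh = fun x => sinh x / cosh x from funext tanh_eq_sinh_div_cosh]
  exact continuous_sinh.div continuous_cosh fun x => (cosh_pos x).ne'

theorem strictMono_tanh : StrictMono tanh := fun x y hxy => by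
  rw [tanh_eq_sinh_div_cosh, tanh_eq_sinh_div_cosh, div_lt_div_iff₀ (cosh_pos x) (cosh_pos y)]
  have h : sinh (x - y) < 0 := sinh_neg_iff.mpr (sub_neg.mpr hxy)
  rw [sinh_sub] at h
  linarith

theorem tanh_nonneg {x : ℝ} (hx : 0 ≤ x) : 0 ≤ tanh x := by
  simpa using strictMono_tanh.monotone hx

theorem tanh_div_self_nonneg (x : ℝ) : 0 ≤ tanh x / x := by
  rcases le_total 0 x with hx | hx
  · exact div_nonneg (tanh_nonneg hx) hx
  · exact div_nonneg_of_nonpos (by simpa using strictMono_tanh.monotone hx) hx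

theorem sinh_le_mul_cosh {x : ℝ} (hx : 0 ≤ x) : sinh x ≤ x * cosh x :=
  calc sinh x = ∫ t in (0 : ℝ)..x, cosh t := by
        rw [integral_deriv_eq_sub' sinh deriv_sinh (fun t _ => differentiableAt_sinh)
          continuous_cosh.continuousOn, sinh_zero, sub_zero]
    _ ≤ ∫ _ in (0 : ℝ)..x, cosh x :=
        integral_mono_on hx (continuous_cosh.intervalIntegrable _ _) intervalIntegrable_const
          fun t ht => cosh_le_cosh.mpr (abs_le_abs_of_nonneg ht.1 ht.2)
    _ = x * cosh x := by simp

theorem tanh_le_self {x : ℝ} (hx : 0 ≤ x) : tanh x ≤ x := by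
  rw [tanh_eq_sinh_div_cosh, div_le_iff₀ (cosh_pos x)]
  exact sinh_le_mul_cosh hx

theorem abs_tanh_le_abs (x : ℝ) : |tanh x| ≤ |x| := by
  rcases le_total 0 x with hx | hx
  · rw [abs_of_nonneg (tanh_nonneg hx), abs_of_nonneg hx]
    exact tanh_le_self hx
  · rw [← abs_neg, ← tanh_neg, ← abs_neg x, abs_of_nonneg (tanh_nonneg (neg_nonneg.mpr hx)),
      abs_of_nonneg (neg_nonneg.mpr hx)]
    exact tanh_le_self (neg_nonneg.mpr hx)

theorem integral_tanh (a b : ℝ) : ∫ x in a..b, tanh x = log (cosh b) - log (cosh a) := by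
  refine integral_eq_sub_of_hasDerivAt (f := fun x => log (cosh x)) (fun x _ => ?_)
    (continuous_tanh.intervalIntegrable a b)
  simpa [tanh_eq_sinh_div_cosh] using (hasDerivAt_cosh x).log (cosh_pos x).ne'

end Real

open Real

theorem integral_tanh_div (a b : ℝ) {c : ℝ} (hc : c ≠ 0) :
    ∫ x in a..b, tanh (x / c) = c * log (cosh (b / c) / cosh (a / c)) := by
  rw [integral_comp_div _ hc, integral_tanh, log_div (cosh_pos _).ne' (cosh_pos _).ne', smul_eq_mul]

theorem strictAntiOn_integral_tanh_div {a b : ℝ} (ha : 0 ≤ a) (hab : a < b) :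
    StrictAntiOn (fun c => ∫ x in a..b, tanh (x / c)) (Ioi 0) := by
  intro c₁ hc₁ c₂ _ hc
  have hdiv {x : ℝ} (hx : 0 < x) : x / c₂ < x / c₁ := div_lt_div_of_pos_left hx hc₁ hc
  refine integral_lt_integral_of_continuousOn_of_le_of_exists_lt hab
    (continuous_tanh.comp (continuous_id.div_const _)).continuousOn
    (continuous_tanh.comp (continuous_id.div_const _)).continuousOn
    (fun x hx => (strictMono_tanh (hdiv (ha.trans_lt hx.1))).le)
    ⟨b, right_mem_Icc.mpr hab.le, strictMono_tanh (hdiv (ha.trans_lt hab))⟩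

theorem integral_tanh_div_nonneg {a b c : ℝ} (ha : 0 ≤ a) (hab : a ≤ b) (hc : 0 ≤ c) :
    0 ≤ ∫ x in a..b, tanh (x / c) :=
  integral_nonneg hab fun _ hx => tanh_nonneg (div_nonneg (ha.trans hx.1) hc)

theorem tendsto_integral_tanh_div_atTop (a b : ℝ) :
    Tendsto (fun c => ∫ x in a..b, tanh (x / c)) atTop (𝓝 0) := by
  rw [← intervalIntegral.integral_zero (a := a) (b := b)]
  refine tendsto_integral_filter_of_dominated_convergence (fun _ => 1)
    (Eventually.of_forall fun c =>
      (continuous_tanh.comp (continuous_id.div_const c)).aestronglyMeasurable)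
    (Eventually.of_forall fun c => ae_of_all _ fun _ _ => (abs_tanh_lt_one _).le)
    intervalIntegrable_const (ae_of_all _ fun x _ => ?_)
  simpa [Function.comp_def] using
    (continuous_tanh.tendsto 0).comp (tendsto_const_nhds.div_atTop tendsto_id)

/-- The hyperbolic analogue of the sine integral `Si`. -/
noncomputable def tanhIntegral (s : ℝ) : ℝ := ∫ u in (0 : ℝ)..s, tanh u / u

theorem intervalIntegrable_tanh_div_self (a b : ℝ) :
    IntervalIntegrable (fun u => tanh u / u) volume a b :=
  (intervalIntegrable_const (c := (1 : ℝ))).mono_fun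
    (continuous_tanh.measurable.div measurable_id).aestronglyMeasurable
    (ae_of_all _ fun u => by
      simpa [abs_div] using div_le_one_of_le₀ (abs_tanh_le_abs u) (abs_nonneg u))

theorem continuous_tanhIntegral : Continuous tanhIntegral :=
  continuous_primitive intervalIntegrable_tanh_div_self 0

theorem monotone_tanhIntegral : Monotone tanhIntegral := fun s t hst => by
  rw [tanhIntegral, tanhIntegral, ← integral_add_adjacent_intervals
    (intervalIntegrable_tanh_div_self 0 s) (intervalIntegrable_tanh_div_self s t)]
  exact le_add_of_nonneg_right (integral_nonneg hst fun u _ => tanh_div_self_nonneg u)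

theorem tanhIntegral_zero : tanhIntegral 0 = 0 := integral_same

theorem tanh_one_mul_log_le_tanhIntegral {s : ℝ} (hs : 1 ≤ s) :
    tanh 1 * log s ≤ tanhIntegral s := by
  have hs₀ : 0 < s := one_pos.trans_le hs
  calc tanh 1 * log s = ∫ u in (1 : ℝ)..s, tanh 1 * u⁻¹ := by
        rw [intervalIntegral.integral_const_mul, integral_inv_of_pos one_pos hs₀, div_one]
    _ ≤ ∫ u in (1 : ℝ)..s, tanh u / u := by
        refine integral_mono_on hs ?_ (intervalIntegrable_tanh_div_self 1 s) fun u hu => ?_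
        · refine (intervalIntegrable_inv (fun u hu => ?_) continuousOn_id).const_mul _
          exact (one_pos.trans_le (uIcc_of_le hs ▸ hu).1).ne'
        · rw [div_eq_mul_inv]
          exact mul_le_mul_of_nonneg_right (strictMono_tanh.monotone hu.1)
            (inv_nonneg.mpr (zero_le_one.trans hu.1))
    _ ≤ tanhIntegral s := by
        rw [tanhIntegral, ← integral_add_adjacent_intervals
          (intervalIntegrable_tanh_div_self 0 1) (intervalIntegrable_tanh_div_self 1 s)]
        exact le_add_of_nonneg_left (integral_nonneg zero_le_one fun u _ => tanh_div_self_nonneg u)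

theorem tendsto_tanhIntegral_atTop : Tendsto tanhIntegral atTop atTop := by
  refine tendsto_atTop_mono' _ ?_
    (tendsto_log_atTop.const_mul_atTop (by simpa using strictMono_tanh zero_lt_one))
  filter_upwards [eventually_ge_atTop 1] with s hs
  exact tanh_one_mul_log_le_tanhIntegral hs

theorem integral_tanh_div_div_eq_tanhIntegral (a : ℝ) {c : ℝ} (hc : c ≠ 0) :
    ∫ ξ in (0 : ℝ)..a, tanh (ξ / c) / ξ = tanhIntegral (a / c) := by
  have h : ∀ ξ, tanh (ξ / c) / ξ = c⁻¹ * (tanh (ξ / c) / (ξ / c)) := fun ξ => by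
    rcases eq_or_ne ξ 0 with rfl | hξ
    · simp
    · field_simp
  simp_rw [h, intervalIntegral.integral_const_mul, integral_comp_div (fun u => tanh u / u) hc,
    zero_div, smul_eq_mul, inv_mul_cancel_left₀ hc, tanhIntegral]

noncomputable def criticalTempRHS (μ ξm τ : ℝ) : ℝ :=
  2 * τ * log (cosh (ξm / (2 * τ)) / cosh (μ / (2 * τ)))
    + μ * ∫ ξ in (0 : ℝ)..μ, tanh (ξ / (2 * τ)) / ξ

theorem criticalTempRHS_eq (μ ξm : ℝ) {τ : ℝ} (hτ : 0 < τ) :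
    criticalTempRHS μ ξm τ
      = (∫ x in μ..ξm, tanh (x / (2 * τ))) + μ * tanhIntegral (μ / (2 * τ)) := by
  have h2τ : 2 * τ ≠ 0 := by positivity
  rw [criticalTempRHS, integral_tanh_div _ _ h2τ, integral_tanh_div_div_eq_tanhIntegral _ h2τ]

theorem strictAntiOn_criticalTempRHS {μ ξm : ℝ} (hμ₀ : 0 ≤ μ) (hμ : μ < ξm) :
    StrictAntiOn (criticalTempRHS μ ξm) (Ioi 0) := by
  intro τ₁ hτ₁ τ₂ hτ₂ hτ
  have h2τ₁ : (0 : ℝ) < 2 * τ₁ := by simpa using hτ₁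
  rw [criticalTempRHS_eq μ ξm hτ₁, criticalTempRHS_eq μ ξm hτ₂]
  refine add_lt_add_of_lt_of_le ?_ (mul_le_mul_of_nonneg_left ?_ hμ₀)
  · exact strictAntiOn_integral_tanh_div hμ₀ hμ h2τ₁ (by simpa using hτ₂) (by linarith)
  · exact monotone_tanhIntegral (div_le_div_of_nonneg_left hμ₀ h2τ₁ (by linarith))

theorem tendsto_criticalTempRHS_nhdsGT_zero {μ ξm : ℝ} (hμ₀ : 0 < μ) (hμ : μ ≤ ξm) :
    Tendsto (criticalTempRHS μ ξm) (𝓝[>] 0) atTop := by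
  have hlim : Tendsto (fun τ => μ / (2 * τ)) (𝓝[>] 0) atTop :=
    (tendsto_inv_nhdsGT_zero.const_mul_atTop (half_pos hμ₀)).congr fun τ => by ring
  refine tendsto_atTop_mono' _ ?_ ((tendsto_tanhIntegral_atTop.comp hlim).const_mul_atTop hμ₀)
  filter_upwards [self_mem_nhdsWithin] with τ hτ
  rw [criticalTempRHS_eq μ ξm hτ]
  exact le_add_of_nonneg_left (integral_tanh_div_nonneg hμ₀.le hμ (by simpa using hτ.le))

theorem tendsto_criticalTempRHS_atTop (μ ξm : ℝ) :
    Tendsto (criticalTempRHS μ ξm) atTop (𝓝 0) := by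
  have h2τ : Tendsto (fun τ : ℝ => 2 * τ) atTop atTop := tendsto_id.const_mul_atTop two_pos
  have hμ2τ : Tendsto (fun τ => μ / (2 * τ)) atTop (𝓝 0) := tendsto_const_nhds.div_atTop h2τ
  have hlim := ((tendsto_integral_tanh_div_atTop μ ξm).comp h2τ).add
    (((continuous_tanhIntegral.tendsto 0).comp hμ2τ).const_mul μ)
  rw [tanhIntegral_zero, mul_zero, add_zero] at hlim
  refine hlim.congr' ?_
  filter_upwards [eventually_gt_atTop 0] with τ hτ
  exact (criticalTempRHS_eq μ ξm hτ).symm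

theorem critical_temp_rhs_properties_general (ξm μ : ℝ) (hμ0 : 0 < μ) (hμ : μ < ξm) :
    StrictAntiOn (fun τ : ℝ =>
        2 * τ * Real.log (Real.cosh (ξm / (2 * τ)) / Real.cosh (μ / (2 * τ)))
          + μ * ∫ ξ in (0 : ℝ)..μ, Real.tanh (ξ / (2 * τ)) / ξ) (Set.Ioi 0) ∧
    Tendsto (fun τ : ℝ =>
        2 * τ * Real.log (Real.cosh (ξm / (2 * τ)) / Real.cosh (μ / (2 * τ)))
          + μ * ∫ ξ in (0 : ℝ)..μ, Real.tanh (ξ / (2 * τ)) / ξ) (𝓝[>] 0) atTop ∧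
    Tendsto (fun τ : ℝ =>
        2 * τ * Real.log (Real.cosh (ξm / (2 * τ)) / Real.cosh (μ / (2 * τ)))
          + μ * ∫ ξ in (0 : ℝ)..μ, Real.tanh (ξ / (2 * τ)) / ξ) atTop (𝓝 0) :=
  ⟨strictAntiOn_criticalTempRHS hμ0.le hμ, tendsto_criticalTempRHS_nhdsGT_zero hμ0 hμ.le,
    tendsto_criticalTempRHS_atTop μ ξm⟩

theorem critical_temp_rhs_properties (ξm μ : ℝ) (hξ : 0 < ξm) (hμ0 : 0 < μ) (hμ : μ < ξm) :
    StrictAntiOn (fun τ : ℝ =>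
        2 * τ * Real.log (Real.cosh (ξm / (2 * τ)) / Real.cosh (μ / (2 * τ)))
          + μ * ∫ ξ in (0 : ℝ)..μ, Real.tanh (ξ / (2 * τ)) / ξ) (Set.Ioi 0) ∧
    Tendsto (fun τ : ℝ =>
        2 * τ * Real.log (Real.cosh (ξm / (2 * τ)) / Real.cosh (μ / (2 * τ)))
          + μ * ∫ ξ in (0 : ℝ)..μ, Real.tanh (ξ / (2 * τ)) / ξ) (𝓝[>] 0) atTop ∧
    Tendsto (fun τ : ℝ =>
        2 * τ * Real.log (Real.cosh (ξm / (2 * τ)) / Real.cosh (μ / (2 * τ)))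
          + μ * ∫ ξ in (0 : ℝ)..μ, Real.tanh (ξ / (2 * τ)) / ξ) atTop (𝓝 0) :=
  critical_temp_rhs_properties_general ξm μ hμ0 hμ
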